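/- arXiv:2001.01774 — 6 statements merged into one kernel-verified Lean document; each statement's English description precedes it below -/
import Mathlib

section
/- Let V be a vector space over ℝ, let k ≥ 1, and let B_1,…,B_k and A_1,…,A_k be linear subspaces of V such that B_i ⊆ A_i and B_{i+1} ⊆ A_i for every i (indices taken cyclically modulo k). Then the linear map φ : (V/B_1) ⊕ ⋯ ⊕ (V/B_k) → (V/A_1) ⊕ ⋯ ⊕ (V/A_k) given by φ(v_1 + B_1, …, v_k + B_k) = (v_2 − v_1 + A_1, v_3 − v_2 + A_2, …, v_1 − v_k + A_k) is well defined, and its cokernel ((V/A_1) ⊕ ⋯ ⊕ (V/A_k)) / im(φ) is isomorphic as an ℝ-vector space to V/(A_1 + A_2 + ⋯ + A_k). -/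
/-!
Summing representatives gives a surjection `ψ : ⊕ V/Aᵢ → V/(A₁ + ⋯ + A_k)`, and the cokernel of
`φ` is `V/(A₁ + ⋯ + A_k)` once `range φ = ker ψ`. The image of `φ` lies in the kernel because
cyclic differences telescope to zero. Conversely, an element of `ker ψ` lifts to a family
`(uᵢ)` with `∑ uᵢ = 0` (subtract from each `vᵢ` its component in a decomposition of
`∑ vᵢ ∈ A₁ + ⋯ + A_k`), and such a family is the cyclic difference of its partial sums.
-/

open Finset

theorem Fin.partialSum_last {M : Type*} [AddCommGroup M] {n : ℕ} (u : Fin n → M) :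
    Fin.partialSum u (Fin.last n) = ∑ i, u i := by
  rw [Fin.partialSum, Fin.val_last, List.take_of_length_le (by simp), List.sum_ofFn]

theorem Fin.exists_sub_eq_of_sum_eq_zero {M : Type*} [AddCommGroup M] {k : ℕ} [NeZero k]
    {u : Fin k → M} (hu : ∑ i, u i = 0) : ∃ v : Fin k → M, ∀ i, v (i + 1) - v i = u i := by
  obtain ⟨n, rfl⟩ : ∃ n, k = n + 1 := Nat.exists_eq_add_one.2 (NeZero.pos k)
  refine ⟨fun i => Fin.partialSum u i.castSucc, fun i => ?_⟩
  rcases Fin.eq_castSucc_or_eq_last i with ⟨j, rfl⟩ | rfl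
  · dsimp only
    rw [Fin.coeSucc_eq_succ, ← Fin.succ_castSucc, sub_eq_neg_add, Fin.partialSum_right_neg]
  · have hlast := Fin.partialSum_last u
    rw [← Fin.succ_last, Fin.partialSum_succ, hu] at hlast
    dsimp only
    rw [Fin.last_add_one, Fin.castSucc_zero, Fin.partialSum_zero, zero_sub,
      neg_eq_iff_add_eq_zero, hlast]

namespace Submodule

variable {R V : Type*} [Ring R] [AddCommGroup V] [Module R V]

theorem exists_sum_eq_of_mem_iSup {ι : Type*} [Fintype ι] {A : ι → Submodule R V} {x : V}
    (hx : x ∈ ⨆ i, A i) : ∃ a : ∀ i, A i, ∑ i, (a i : V) = x := by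
  simpa using (mem_iSup_finset_iff_exists_sum (s := univ) A x).1 (by simpa using hx)

theorem exists_pi_mk_eq {ι : Type*} (A : ι → Submodule R V) (x : (i : ι) → V ⧸ A i) :
    ∃ v : ι → V, (fun i => Quotient.mk (v i)) = x :=
  Function.Surjective.piMap (fun i => Quotient.mk_surjective (A i)) x

section Sum

variable {ι : Type*} [Fintype ι] (A : ι → Submodule R V)

def piQuotientSum : ((i : ι) → V ⧸ A i) →ₗ[R] V ⧸ ⨆ i, A i :=
  ∑ i, factor (le_iSup A i) ∘ₗ LinearMap.proj i

theorem piQuotientSum_mk (v : ι → V) :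
    piQuotientSum A (fun i => Quotient.mk (v i)) = Quotient.mk (∑ i, v i) := by
  simp only [piQuotientSum, LinearMap.sum_apply, LinearMap.comp_apply, LinearMap.proj_apply]
  exact (map_sum (mkQ _) v univ).symm

theorem piQuotientSum_surjective [Nonempty ι] : Function.Surjective (piQuotientSum A) := by
  classical
  intro z
  obtain ⟨x, rfl⟩ := Quotient.mk_surjective _ z
  obtain ⟨i⟩ := ‹Nonempty ι›
  refine ⟨fun j => Quotient.mk (Pi.single (M := fun _ => V) i x j), ?_⟩
  rw [piQuotientSum_mk, Finset.sum_pi_single']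
  simp

theorem exists_sum_eq_zero_of_mem_ker_piQuotientSum {x : (i : ι) → V ⧸ A i}
    (hx : x ∈ LinearMap.ker (piQuotientSum A)) :
    ∃ u : ι → V, ∑ i, u i = 0 ∧ (fun i => Quotient.mk (u i)) = x := by
  obtain ⟨w, rfl⟩ := exists_pi_mk_eq A x
  rw [LinearMap.mem_ker, piQuotientSum_mk, Quotient.mk_eq_zero] at hx
  obtain ⟨a, ha⟩ := exists_sum_eq_of_mem_iSup hx
  refine ⟨fun i => w i - a i, by rw [sum_sub_distrib, ha, sub_self], funext fun i => ?_⟩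
  exact (Quotient.eq _).2 (by simp [(a i).2])

end Sum

section Cyclic

variable {k : ℕ} [NeZero k] {B A : Fin k → Submodule R V}

def cyclicDiff (hB : ∀ i, B i ≤ A i) (hB' : ∀ i, B (i + 1) ≤ A i) :
    ((i : Fin k) → V ⧸ B i) →ₗ[R] ((i : Fin k) → V ⧸ A i) :=
  LinearMap.pi fun i =>
    factor (hB' i) ∘ₗ LinearMap.proj (i + 1) - factor (hB i) ∘ₗ LinearMap.proj i

variable (hB : ∀ i, B i ≤ A i) (hB' : ∀ i, B (i + 1) ≤ A i)

theorem cyclicDiff_mk (v : Fin k → V) :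
    cyclicDiff hB hB' (fun i => Quotient.mk (v i)) = fun i => Quotient.mk (v (i + 1) - v i) := by
  funext i
  simp [cyclicDiff, Quotient.mk_sub]

theorem range_cyclicDiff :
    LinearMap.range (cyclicDiff hB hB') = LinearMap.ker (piQuotientSum A) := by
  apply le_antisymm
  · rintro _ ⟨y, rfl⟩
    obtain ⟨v, rfl⟩ := exists_pi_mk_eq B y
    rw [LinearMap.mem_ker, cyclicDiff_mk, piQuotientSum_mk, sum_sub_distrib,
      Fintype.sum_equiv (Equiv.addRight 1) (fun i => v (i + 1)) v fun _ => rfl, sub_self,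
      Quotient.mk_zero]
  · intro x hx
    obtain ⟨u, hu, rfl⟩ := exists_sum_eq_zero_of_mem_ker_piQuotientSum A hx
    obtain ⟨v, hv⟩ := Fin.exists_sub_eq_of_sum_eq_zero hu
    exact ⟨fun i => Quotient.mk (v i), by simp only [cyclicDiff_mk, hv]⟩

end Cyclic

end Submodule

/-- Let `V` be an ℝ-vector space, `k ≥ 1`, and `B i ⊆ A i`,
`B (i+1) ⊆ A i` (indices cyclic mod `k`) subspaces of `V`. Then the map
`φ : ⊕ V/Bᵢ → ⊕ V/Aᵢ`, `φ(v₁+B₁,…,v_k+B_k) = (v₂−v₁+A₁, …, v₁−v_k+A_k)`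
is well defined and its cokernel is isomorphic to `V/(A₁ + ⋯ + A_k)`. -/
theorem stmt0 {V : Type*} [AddCommGroup V] [Module ℝ V] (k : ℕ) [NeZero k]
    (B A : Fin k → Submodule ℝ V)
    (hB : ∀ i, B i ≤ A i) (hB' : ∀ i : Fin k, B (i + 1) ≤ A i) :
    ∃ φ : ((i : Fin k) → V ⧸ B i) →ₗ[ℝ] ((i : Fin k) → V ⧸ A i),
      (∀ v : Fin k → V,
        φ (fun i => Submodule.Quotient.mk (v i)) =
          fun i => Submodule.Quotient.mk (v (i + 1) - v i)) ∧
      Nonempty ((((i : Fin k) → V ⧸ A i) ⧸ LinearMap.range φ) ≃ₗ[ℝ]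
        (V ⧸ ⨆ i, A i)) := by
  refine ⟨Submodule.cyclicDiff hB hB', Submodule.cyclicDiff_mk hB hB', ?_⟩
  rw [Submodule.range_cyclicDiff]
  exact ⟨(Submodule.piQuotientSum A).quotKerEquivOfSurjective
    (Submodule.piQuotientSum_surjective A)⟩
end

section
/- Let m ≥ 0 and r ≥ 0 be integers, let ℓ_1, ℓ_2, ℓ_3 ∈ ℝ[x,y] be polynomials of total degree 1, and let J_1, J_2, J_3 be ℝ-subspaces of P_m such that ⟨ℓ_i^{r+1}⟩_m + ⟨ℓ_{i+1}^{r+1}⟩_m ⊆ J_i for i = 1, 2, 3 (indices cyclic modulo 3). Then the linear map φ : ⊕_{i=1}^{3} P_m/⟨ℓ_i^{r+1}⟩_m → ⊕_{i=1}^{3} P_m/J_i induced by the matrix [[−1,1,0],[0,−1,1],[1,0,−1]] (i.e. sending (f_1, f_2, f_3) to (f_2 − f_1 mod J_1, f_3 − f_2 mod J_2, f_1 − f_3 mod J_3)) is well defined, and its cokernel is isomorphic as an ℝ-vector space to P_m/(J_1 + J_2 + J_3). -/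
open MvPolynomial

noncomputable section

/-- Bivariate real polynomials. -/
abbrev Pol := MvPolynomial (Fin 2) ℝ

/-- `Pm m`: the subspace of polynomials of total degree at most `m`. -/
def Pm (m : ℕ) : Submodule ℝ Pol := MvPolynomial.restrictTotalDegree (Fin 2) ℝ m

/-- `Pm e` for an integer `e`, with the convention `Pm e = 0` for `e < 0`. -/
def Pz (e : ℤ) : Submodule ℝ Pol := if e < 0 then ⊥ else Pm e.toNat

/-- `⟨f⟩ₘ` for `f` of degree `d`: the subspace `f · P (m - d)` of all products
`f * g` with `g` of total degree at most `m - d`. -/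
def piece (f : Pol) (d m : ℕ) : Submodule ℝ Pol :=
  (Pz ((m : ℤ) - (d : ℤ))).map (LinearMap.mulLeft ℝ f)

/-!
The map `φ` is the cyclic difference operator `f ↦ (f (i + 1) - f i)ᵢ` on quotients.
The sum map `σ : ⊕ᵢ M/Jᵢ → M/(∑ᵢ Jᵢ)` is surjective, and its kernel is exactly the range
of `φ`: a family `g` with `∑ᵢ gᵢ ∈ ∑ᵢ Jᵢ` becomes, after subtracting suitable `jᵢ ∈ Jᵢ`,
a family with zero sum, and such a family is a cyclic difference (take partial sums).
Hence `coker φ ≅ M/(∑ᵢ Jᵢ)`.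
-/

open Finset Submodule

variable {R M : Type*} [Ring R] [AddCommGroup M] [Module R M]

lemma sum_add_one_sub_eq_zero {n : ℕ} (f : Fin (n + 1) → M) : ∑ i, (f (i + 1) - f i) = 0 := by
  rw [sum_sub_distrib, Fintype.sum_equiv (Equiv.addRight 1) (fun i => f (i + 1)) f fun _ => rfl,
    sub_self]

lemma exists_add_one_sub_eq_of_sum_eq_zero {n : ℕ} {h : Fin (n + 1) → M} (hh : ∑ i, h i = 0) :
    ∃ f : Fin (n + 1) → M, ∀ i, f (i + 1) - f i = h i := by
  refine ⟨fun i => ∑ j ∈ Iio i, h j, fun i => ?_⟩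
  induction i using Fin.lastCases with
  | last =>
    rw [Fin.sum_univ_castSucc, add_eq_zero_iff_eq_neg'] at hh
    have hIio : Iio (0 : Fin (n + 1)) = ∅ := Iio_eq_empty.mpr isMin_bot
    simp [Fin.Iio_last_eq_map, hIio, hh]
  | cast k =>
    have hIio : Iio k.succ = Iic k.castSucc := by ext j; simp [Fin.lt_def, Fin.le_def]
    simp only [Fin.coeSucc_eq_succ, hIio, ← sum_Iio_add_eq_sum_Iic, add_sub_cancel_left]

section SumQuot

variable {ι : Type*} [Fintype ι] (J : ι → Submodule R M)

def sumQuot : ((i : ι) → M ⧸ J i) →ₗ[R] M ⧸ ⨆ i, J i :=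
  ∑ i, (J i).mapQ _ LinearMap.id (le_iSup J i) ∘ₗ LinearMap.proj i

lemma sumQuot_mk (g : ι → M) :
    sumQuot J (fun i => Submodule.Quotient.mk (g i)) = Submodule.Quotient.mk (∑ i, g i) := by
  simp [sumQuot, ← mkQ_apply, map_sum]

lemma sumQuot_surjective [Nonempty ι] : Function.Surjective (sumQuot J) := by
  classical
  intro y
  obtain ⟨p, rfl⟩ := Submodule.Quotient.mk_surjective _ y
  obtain ⟨i₀⟩ := ‹Nonempty ι›
  exact ⟨fun i => Submodule.Quotient.mk (Pi.single (M := fun _ => M) i₀ p i),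
    by simp [sumQuot_mk]⟩

end SumQuot

section CyclicDiffQuot

variable {n : ℕ} (K J : Fin (n + 1) → Submodule R M)
  (hK : ∀ i, K i ≤ J i) (hK' : ∀ i, K (i + 1) ≤ J i)

def cyclicDiffQuot : ((i : Fin (n + 1)) → M ⧸ K i) →ₗ[R] ((i : Fin (n + 1)) → M ⧸ J i) :=
  LinearMap.pi fun i =>
    (K (i + 1)).mapQ (J i) LinearMap.id (hK' i) ∘ₗ LinearMap.proj (i + 1) -
      (K i).mapQ (J i) LinearMap.id (hK i) ∘ₗ LinearMap.proj i

lemma cyclicDiffQuot_mk (f : Fin (n + 1) → M) :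
    cyclicDiffQuot K J hK hK' (fun i => Submodule.Quotient.mk (f i)) =
      fun i => Submodule.Quotient.mk (f (i + 1) - f i) := by
  funext i
  simp [cyclicDiffQuot, Submodule.Quotient.mk_sub]

lemma range_cyclicDiffQuot :
    LinearMap.range (cyclicDiffQuot K J hK hK') = LinearMap.ker (sumQuot J) := by
  apply le_antisymm
  · rintro _ ⟨b, rfl⟩
    obtain ⟨f, rfl⟩ := Function.Surjective.piMap (fun i => (K i).mkQ_surjective) b
    change sumQuot J (cyclicDiffQuot K J hK hK' fun i => Submodule.Quotient.mk (f i)) = 0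
    rw [cyclicDiffQuot_mk, sumQuot_mk, sum_add_one_sub_eq_zero, Submodule.Quotient.mk_zero]
  · intro a ha
    obtain ⟨g, rfl⟩ := Function.Surjective.piMap (fun i => (J i).mkQ_surjective) a
    change sumQuot J (fun i => Submodule.Quotient.mk (g i)) = 0 at ha
    rw [sumQuot_mk, Submodule.Quotient.mk_eq_zero] at ha
    obtain ⟨j, hj⟩ := (mem_iSup_finset_iff_exists_sum (s := univ) J _).mp (by simpa using ha)
    obtain ⟨f, hf⟩ := exists_add_one_sub_eq_of_sum_eq_zero (h := fun i => g i - j i)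
      (by simp [sum_sub_distrib, hj])
    refine ⟨fun i => Submodule.Quotient.mk (f i), ?_⟩
    rw [cyclicDiffQuot_mk]
    funext i
    rw [hf i]
    exact (Submodule.Quotient.eq _).mpr (by rw [sub_sub_cancel_left]; exact neg_mem (j i).2)

def quotRangeCyclicDiffQuotEquiv :
    (((i : Fin (n + 1)) → M ⧸ J i) ⧸ LinearMap.range (cyclicDiffQuot K J hK hK')) ≃ₗ[R]
      M ⧸ ⨆ i, J i :=
  (quotEquivOfEq _ _ (range_cyclicDiffQuot K J hK hK')).trans
    ((sumQuot J).quotKerEquivOfSurjective (sumQuot_surjective J))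

end CyclicDiffQuot

theorem stmt1_general (m r : ℕ) (ℓ : Fin 3 → Pol)
    (J : Fin 3 → Submodule ℝ ↥(Pm m))
    (hJ : ∀ i : Fin 3,
      (piece (ℓ i ^ (r + 1)) (r + 1) m).comap (Pm m).subtype ⊔
        (piece (ℓ (i + 1) ^ (r + 1)) (r + 1) m).comap (Pm m).subtype ≤ J i) :
    ∃ φ : ((i : Fin 3) → ↥(Pm m) ⧸ (piece (ℓ i ^ (r + 1)) (r + 1) m).comap (Pm m).subtype)
        →ₗ[ℝ] ((i : Fin 3) → ↥(Pm m) ⧸ J i),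
      (∀ f : (i : Fin 3) → ↥(Pm m),
        φ (fun i => Submodule.Quotient.mk (f i)) =
          fun i => Submodule.Quotient.mk (f (i + 1) - f i)) ∧
      Nonempty ((@HasQuotient.Quotient ((i : Fin 3) → ↥(Pm m) ⧸ J i) _
          (@Submodule.hasQuotient ℝ _ _ (@Pi.addCommGroup _ _ (fun i => Submodule.Quotient.addCommGroup (J i)))
            (@Pi.module (Fin 3) _ ℝ _ (fun i => (Submodule.Quotient.addCommGroup (J i)).toAddCommMonoid)
              (fun i => Submodule.Quotient.module (J i))))
          (LinearMap.range φ :)) ≃ₗ[ℝ]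
        (↥(Pm m) ⧸ (J 0 ⊔ J 1 ⊔ J 2))) := by
  have hK (i : Fin 3) := le_sup_left.trans (hJ i)
  have hK' (i : Fin 3) := le_sup_right.trans (hJ i)
  exact ⟨cyclicDiffQuot _ J hK hK', cyclicDiffQuot_mk _ J hK hK',
    ⟨(quotRangeCyclicDiffQuotEquiv _ J hK hK').trans (quotEquivOfEq _ _ iSup_fin_three)⟩⟩

/-- For `ℓ₁, ℓ₂, ℓ₃` of total degree 1 and subspaces `Jᵢ ⊆ Pₘ` with
`⟨ℓᵢ^{r+1}⟩ₘ + ⟨ℓᵢ₊₁^{r+1}⟩ₘ ⊆ Jᵢ` (indices cyclic mod 3), the map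
`φ : ⊕ᵢ Pₘ/⟨ℓᵢ^{r+1}⟩ₘ → ⊕ᵢ Pₘ/Jᵢ` induced by the matrix
`[[−1,1,0],[0,−1,1],[1,0,−1]]` is well defined, and its cokernel is isomorphic to
`Pₘ/(J₁+J₂+J₃)`. -/
theorem stmt1 (m r : ℕ) (ℓ : Fin 3 → Pol) (hdeg : ∀ i, (ℓ i).totalDegree = 1)
    (J : Fin 3 → Submodule ℝ ↥(Pm m))
    (hJ : ∀ i : Fin 3,
      (piece (ℓ i ^ (r + 1)) (r + 1) m).comap (Pm m).subtype ⊔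
        (piece (ℓ (i + 1) ^ (r + 1)) (r + 1) m).comap (Pm m).subtype ≤ J i) :
    ∃ φ : ((i : Fin 3) → ↥(Pm m) ⧸ (piece (ℓ i ^ (r + 1)) (r + 1) m).comap (Pm m).subtype)
        →ₗ[ℝ] ((i : Fin 3) → ↥(Pm m) ⧸ J i),
      (∀ f : (i : Fin 3) → ↥(Pm m),
        φ (fun i => Submodule.Quotient.mk (f i)) =
          fun i => Submodule.Quotient.mk (f (i + 1) - f i)) ∧
      Nonempty ((@HasQuotient.Quotient ((i : Fin 3) → ↥(Pm m) ⧸ J i) _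
          (@Submodule.hasQuotient ℝ _ _ (@Pi.addCommGroup _ _ (fun i => Submodule.Quotient.addCommGroup (J i)))
            (@Pi.module (Fin 3) _ ℝ _ (fun i => (Submodule.Quotient.addCommGroup (J i)).toAddCommMonoid)
              (fun i => Submodule.Quotient.module (J i))))
          (LinearMap.range φ :)) ≃ₗ[ℝ]
        (↥(Pm m) ⧸ (J 0 ⊔ J 1 ⊔ J 2))) :=
  stmt1_general m r ℓ J hJ

end
end

section
/- Let m ≥ 0 be an integer and set z = x + y + 1 ∈ ℝ[x,y]. Then the family of polynomials {x^i y^j z^k : i, j, k ≥ 0, i + j + k = m} is a basis of the ℝ-vector space P_m; in particular these binom(m+2, 2) polynomials are linearly independent and every polynomial of total degree at most m is a unique ℝ-linear combination of them. -/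
/-!
Since `1 = z - x - y`, multiplying by it shows that the span of the products `xⁱ yʲ zᵏ` with
`i + j + k = n` grows with `n`. So every monomial `xᵃ yᵇ` with `a + b ≤ m` lies in the span of
those with `i + j + k = m`, which is therefore all of `Pₘ` (the reverse inclusion is a degree
count). The monomials `xⁱ yʲ`, indexed by the same triples `(i, j, m - i - j)`, are linearly
independent and lie in this span, so the spanning family, having no more members than the
dimension, is independent too.
-/

open MvPolynomial

noncomputable section

open Submodule Set

theorem LinearIndependent.of_span_le {K V ι : Type*} [DivisionRing K] [AddCommGroup V]
    [Module K V] [Finite ι] {g b : ι → V} (hg : LinearIndependent K g)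
    (h : span K (range g) ≤ span K (range b)) : LinearIndependent K b := by
  have := Fintype.ofFinite ι
  have := Module.Finite.span_of_finite K (finite_range b)
  rw [linearIndependent_iff_card_le_finrank_span]
  exact (linearIndependent_iff_card_eq_finrank_span.mp hg).trans_le (finrank_mono h)

instance (n : ℕ) : Finite {t : ℕ × ℕ × ℕ // t.1 + t.2.1 + t.2.2 = n} :=
  (finite_Iic (n, n, n)).subset fun t (ht : t.1 + t.2.1 + t.2.2 = n) => by
    simp only [mem_Iic, Prod.le_def]
    omega

def homogeneousMonomials {A : Type*} [CommSemiring A] (x y z : A) (n : ℕ)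
    (t : {t : ℕ × ℕ × ℕ // t.1 + t.2.1 + t.2.2 = n}) : A :=
  x ^ t.1.1 * y ^ t.1.2.1 * z ^ t.1.2.2

section span

variable {R A : Type*} [CommRing R] [CommRing A] [Algebra R A] (x y z : A)

theorem span_homogeneousMonomials_le_comap_mulLeft {a : A} (ha : a ∈ ({x, y, z} : Set A))
    (n : ℕ) : span R (range (homogeneousMonomials x y z n)) ≤
      (span R (range (homogeneousMonomials x y z (n + 1)))).comap (LinearMap.mulLeft R a) := by
  rw [span_le]
  rintro _ ⟨⟨⟨i, j, k⟩, hijk : i + j + k = n⟩, rfl⟩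
  apply subset_span
  dsimp only [LinearMap.mulLeft_apply, homogeneousMonomials]
  rcases ha with rfl | rfl | rfl
  exacts [⟨⟨(i + 1, j, k), by dsimp only; omega⟩, by dsimp only [homogeneousMonomials]; ring⟩,
    ⟨⟨(i, j + 1, k), by dsimp only; omega⟩, by dsimp only [homogeneousMonomials]; ring⟩,
    ⟨⟨(i, j, k + 1), by dsimp only; omega⟩, by dsimp only [homogeneousMonomials]; ring⟩]

variable {x y z}

theorem monotone_span_homogeneousMonomials (hz : z = x + y + 1) :
    Monotone fun n => span R (range (homogeneousMonomials x y z n)) := by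
  refine monotone_nat_of_le_succ fun n p hp => ?_
  have mem (a : A) (ha : a ∈ ({x, y, z} : Set A)) :=
    span_homogeneousMonomials_le_comap_mulLeft (R := R) x y z ha n hp
  have hp' : p = z * p - x * p - y * p := by rw [hz]; ring
  rw [hp']
  exact sub_mem (sub_mem (mem z (by simp)) (mem x (by simp))) (mem y (by simp))

theorem pow_mul_pow_mem_span_homogeneousMonomials (hz : z = x + y + 1) {a b n : ℕ}
    (hab : a + b ≤ n) : x ^ a * y ^ b ∈ span R (range (homogeneousMonomials x y z n)) := by
  refine monotone_span_homogeneousMonomials hz hab (subset_span ⟨⟨(a, b, 0), rfl⟩, ?_⟩)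
  simp [homogeneousMonomials]

end span

theorem totalDegree_homogeneousMonomials_le {σ R : Type*} [CommSemiring R]
    {x y z : MvPolynomial σ R} (hx : x.totalDegree ≤ 1) (hy : y.totalDegree ≤ 1)
    (hz : z.totalDegree ≤ 1) (n : ℕ) (t : {t : ℕ × ℕ × ℕ // t.1 + t.2.1 + t.2.2 = n}) :
    (homogeneousMonomials x y z n t).totalDegree ≤ n := by
  obtain ⟨⟨i, j, k⟩, rfl⟩ := t
  have (p : MvPolynomial σ R) (hp : p.totalDegree ≤ 1) (e : ℕ) : (p ^ e).totalDegree ≤ e :=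
    (totalDegree_pow p e).trans (by simpa using Nat.mul_le_mul_left e hp)
  calc _ ≤ (x ^ i).totalDegree + (y ^ j).totalDegree + (z ^ k).totalDegree :=
        (totalDegree_mul _ _).trans (by grw [totalDegree_mul])
    _ ≤ i + j + k := by grw [this x hx, this y hy, this z hz]

section bivariate

variable {R : Type*} [CommRing R]

theorem monomial_mem_span_homogeneousMonomials {v : Fin 2 →₀ ℕ} {n : ℕ} (hv : v 0 + v 1 ≤ n) :
    monomial v (1 : R) ∈ span R (range (homogeneousMonomials (X 0) (X 1) (X 0 + X 1 + 1) n)) := by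
  rw [monomial_eq, C_1, one_mul, Finsupp.prod_fintype _ _ fun _ => pow_zero _, Fin.prod_univ_two]
  exact pow_mul_pow_mem_span_homogeneousMonomials rfl hv

theorem span_homogeneousMonomials_eq_restrictTotalDegree (n : ℕ) :
    span R (range (homogeneousMonomials (X 0) (X 1) (X 0 + X 1 + 1) n)) =
      restrictTotalDegree (Fin 2) R n := by
  apply le_antisymm
  · have hX (i : Fin 2) : (X i : MvPolynomial (Fin 2) R).totalDegree ≤ 1 :=
      (totalDegree_monomial_le _ _).trans (by simp)
    have hz : (X 0 + X 1 + 1 : MvPolynomial (Fin 2) R).totalDegree ≤ 1 := by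
      grw [totalDegree_add, totalDegree_add, hX, hX, totalDegree_one]
      simp
    rw [span_le]
    rintro _ ⟨t, rfl⟩
    exact (mem_restrictTotalDegree _ _ _).mpr
      (totalDegree_homogeneousMonomials_le (hX 0) (hX 1) hz n t)
  · rw [restrictTotalDegree, restrictSupport_eq_span, span_le]
    rintro _ ⟨v, hv, rfl⟩
    have hv : v.sum (fun _ e => e) ≤ n := hv
    rw [Finsupp.sum_fintype _ _ fun _ => rfl, Fin.sum_univ_two] at hv
    exact monomial_mem_span_homogeneousMonomials hv

end bivariate

theorem linearIndependent_homogeneousMonomials {K : Type*} [Field K] (n : ℕ) :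
    LinearIndependent K
      (homogeneousMonomials (X 0 : MvPolynomial (Fin 2) K) (X 1) (X 0 + X 1 + 1) n) := by
  let v (t : {t : ℕ × ℕ × ℕ // t.1 + t.2.1 + t.2.2 = n}) : Fin 2 →₀ ℕ :=
    Finsupp.single 0 t.1.1 + Finsupp.single 1 t.1.2.1
  have hv0 (t) : v t 0 = t.1.1 := by simp [v]
  have hv1 (t) : v t 1 = t.1.2.1 := by simp [v]
  have hv : v.Injective := fun t t' h => by
    have h0 : t.1.1 = t'.1.1 := by rw [← hv0, ← hv0, h]
    have h1 : t.1.2.1 = t'.1.2.1 := by rw [← hv1, ← hv1, h]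
    have := t.2
    have := t'.2
    exact Subtype.ext (Prod.ext h0 (Prod.ext h1 (by omega)))
  refine ((basisMonomials _ K).linearIndependent.comp v hv).of_span_le (span_le.mpr ?_)
  rintro _ ⟨t, rfl⟩
  have := t.2
  exact monomial_mem_span_homogeneousMonomials (by rw [hv0, hv1]; omega)

/-- With `z = x + y + 1`, the family
`{xⁱ yʲ zᵏ : i + j + k = m}` is a basis of `Pₘ`: it is linearly independent and
spans the space of polynomials of total degree at most `m`. -/
theorem stmt3 (m : ℕ) :
    LinearIndependent ℝ (fun t : {t : ℕ × ℕ × ℕ // t.1 + t.2.1 + t.2.2 = m} =>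
      (X 0 : Pol) ^ t.1.1 * X 1 ^ t.1.2.1 * (X 0 + X 1 + 1) ^ t.1.2.2) ∧
    Submodule.span ℝ
      (Set.range (fun t : {t : ℕ × ℕ × ℕ // t.1 + t.2.1 + t.2.2 = m} =>
        (X 0 : Pol) ^ t.1.1 * X 1 ^ t.1.2.1 * (X 0 + X 1 + 1) ^ t.1.2.2)) = Pm m :=
  ⟨linearIndependent_homogeneousMonomials m, span_homogeneousMonomials_eq_restrictTotalDegree m⟩

end
end

section
/- Let r ≥ 0 and n ≥ 2 be integers and let ℓ_1, …, ℓ_n ∈ ℝ[x,y] be homogeneous linear forms that are pairwise non-proportional. Let I be the ideal of ℝ[x,y] generated by ℓ_1^{r+1}, …, ℓ_n^{r+1}, let t = min(r+2, n), and let Ω = r + ⌈(r+1)/(t−1)⌉. Then Ω is the minimal integer d such that x^i y^j ∈ I for all i, j ≥ 0 with i + j ≥ d; that is, (a) for all i, j ≥ 0 with i + j ≥ Ω one has x^i y^j ∈ I, and (b) there exist i, j ≥ 0 with i + j = Ω − 1 and x^i y^j ∉ I. -/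
/-!
Apolarity. Under the pairing `⟨p, q⟩ = ∑ₘ pₘ qₘ m₀! m₁!`, multiplication by `ℓ = a x + b y` is
adjoint to the derivation `D_ℓ = a ∂ₓ + b ∂_y`, and the pairing is positive definite. Hence all
forms of degree `d` lie in `I` as soon as no nonzero form `F` of degree `d` satisfies
`D_{ℓᵢ}^{r+1} F = 0` for all `i`, while every such `F` is orthogonal to all of `I`.

In the coordinates `x ↦ ℓ`, `y ↦ ℓ^⊥ = b x - a y` (`linForm b (-a)`), `D_ℓ` becomes a multiple
of `∂ₓ`, so `D_ℓ^{r+1} F = 0` forces `(ℓ^⊥)^{d-r} ∣ F`. With `q = ⌈(r+1)/(t-1)⌉ = ⌊r/(t-1)⌋ + 1`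
and `d = r + q`, the `t` pairwise coprime factors `(ℓᵢ^⊥)^q` have total degree `t q > d`, so
`F = 0`. Conversely `(n - 1)(q - 1) ≤ r`, so `F = ∏ᵢ (ℓᵢ^⊥)^{q-1} · x^c` of degree `r + q - 1`
exists; removing the factor `(ℓᵢ^⊥)^{q-1}`, on which `D_{ℓᵢ}` acts trivially, leaves a form of
degree `r`, so `D_{ℓᵢ}^{r+1} F = 0`. A monomial of the support of `F` pairs nontrivially with `F`
and therefore lies outside `I`.
-/

open MvPolynomial

noncomputable section

namespace MvPolynomial

variable {σ R : Type*} [CommRing R]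

theorem IsHomogeneous.eq_zero_of_dvd [IsDomain R] {p F : MvPolynomial σ R} {d e : ℕ}
    (hp : p.IsHomogeneous e) (hp0 : p ≠ 0) (hF : F.IsHomogeneous d) (hdvd : p ∣ F)
    (hde : d < e) : F = 0 := by
  by_contra hF0
  obtain ⟨g, rfl⟩ := hdvd
  have hdeg := totalDegree_mul_of_isDomain hp0 (right_ne_zero_of_mul hF0)
  rw [hF.totalDegree hF0, hp.totalDegree hp0] at hdeg
  omega

theorem lt_of_mem_support_of_pderiv_iterate_eq_zero [IsDomain R] [CharZero R] {i : σ} {k : ℕ}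
    {p : MvPolynomial σ R} (hp : (pderiv i)^[k] p = 0) {m : σ →₀ ℕ} (hm : m ∈ p.support) :
    m i < k := by
  induction k generalizing p m with
  | zero => simp_all
  | succ k ih =>
    rw [Function.iterate_succ_apply] at hp
    obtain h | h := Nat.eq_zero_or_pos (m i)
    · omega
    have hm' : m - Finsupp.single i 1 + Finsupp.single i 1 = m :=
      tsub_add_cancel_of_le (Finsupp.single_le_iff.mpr h)
    have hmem : m - Finsupp.single i 1 ∈ (pderiv i p).support := by
      rw [mem_support_iff, coeff_pderiv, hm']
      exact mul_ne_zero (mem_support_iff.mp hm) (by norm_cast)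
    have := ih hp hmem
    rw [Finsupp.tsub_apply, Finsupp.single_eq_same] at this
    omega

theorem X_pow_dvd_of_forall_mem_support {i : σ} {k : ℕ} {p : MvPolynomial σ R}
    (h : ∀ m ∈ p.support, k ≤ m i) : X i ^ k ∣ p := by
  classical
  rw [X_pow_eq_monomial, monomial_one_dvd_iff_modMonomial_eq_zero]
  ext m
  by_cases hm : Finsupp.single i k ≤ m
  · rw [coeff_modMonomial_of_le _ hm, coeff_zero]
  · rw [coeff_modMonomial_of_not_le _ hm, coeff_zero, ← notMem_support_iff]
    exact fun hmem => hm (Finsupp.single_le_iff.mpr (h m hmem))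

end MvPolynomial

namespace Pol

variable {a b a' b' : ℝ}

def linForm (a b : ℝ) : Pol := C a * X 0 + C b * X 1

theorem isHomogeneous_linForm (a b : ℝ) : (linForm a b).IsHomogeneous 1 :=
  ((isHomogeneous_C _ a).mul (isHomogeneous_X _ 0)).add
    ((isHomogeneous_C _ b).mul (isHomogeneous_X _ 1))

theorem linForm_eq_smul_iff {c : ℝ} :
    linForm a b = c • linForm a' b' ↔ a = c * a' ∧ b = c * b' := by
  constructor
  · intro h
    have hcoeff (i : Fin 2) := congrArg (coeff (Finsupp.single i 1)) h
    simpa [linForm, coeff_X, Finsupp.single_eq_single_iff] using And.intro (hcoeff 0) (hcoeff 1)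
  · rintro ⟨rfl, rfl⟩
    simp only [linForm, smul_eq_C_mul, C_mul]
    ring

theorem sq_add_sq_ne_zero_of_ne (h : (a, b) ≠ (0, 0)) : a ^ 2 + b ^ 2 ≠ 0 := by
  contrapose! h
  have ha : a = 0 := by nlinarith [sq_nonneg a, sq_nonneg b]
  have hb : b = 0 := by nlinarith [sq_nonneg a, sq_nonneg b]
  rw [ha, hb]

def dirDeriv (a b : ℝ) : Derivation ℝ Pol Pol := a • pderiv 0 + b • pderiv 1

theorem dirDeriv_linForm : dirDeriv a b (linForm a' b') = C (a * a' + b * b') := by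
  simp [dirDeriv, linForm, pderiv_X, smul_eq_C_mul]

theorem dirDeriv_perp_pow_mul (m : ℕ) (p : Pol) :
    dirDeriv a b (linForm b (-a) ^ m * p) = linForm b (-a) ^ m * dirDeriv a b p := by
  have hperp : dirDeriv a b (linForm b (-a)) = 0 := by
    rw [dirDeriv_linForm, mul_neg, mul_comm b a, add_neg_cancel, C_0]
  rw [Derivation.leibniz, Derivation.leibniz_pow, hperp]
  simp

theorem dirDeriv_iterate_perp_pow_mul (k m : ℕ) (p : Pol) :
    (dirDeriv a b)^[k] (linForm b (-a) ^ m * p) = linForm b (-a) ^ m * (dirDeriv a b)^[k] p := by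
  induction k with
  | zero => rfl
  | succ k ih => rw [Function.iterate_succ_apply', ih, dirDeriv_perp_pow_mul,
      ← Function.iterate_succ_apply' (dirDeriv a b)]

theorem isHomogeneous_dirDeriv {p : Pol} {d : ℕ} (hp : p.IsHomogeneous d) :
    (dirDeriv a b p).IsHomogeneous (d - 1) :=
  ((homogeneousSubmodule _ _ _).smul_mem a hp.pderiv).add
    ((homogeneousSubmodule _ _ _).smul_mem b hp.pderiv)

theorem isHomogeneous_dirDeriv_iterate {p : Pol} {d : ℕ} (hp : p.IsHomogeneous d) (k : ℕ) :
    ((dirDeriv a b)^[k] p).IsHomogeneous (d - k) := by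
  induction k with
  | zero => exact hp
  | succ k ih => rw [Function.iterate_succ_apply', Nat.sub_succ]; exact isHomogeneous_dirDeriv ih

theorem dirDeriv_iterate_eq_zero_of_lt {p : Pol} {d k : ℕ} (hp : p.IsHomogeneous d)
    (hdk : d < k) : (dirDeriv a b)^[k] p = 0 := by
  obtain ⟨c, hc⟩ : ∃ c, (dirDeriv a b)^[d] p = C c := ⟨_, totalDegree_eq_zero_iff_eq_C.mp
    (by simpa using (isHomogeneous_dirDeriv_iterate hp d).totalDegree_le)⟩
  obtain ⟨j, rfl⟩ : ∃ j, k = j + 1 + d := ⟨k - d - 1, by omega⟩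
  rw [Function.iterate_add_apply, hc, Function.iterate_succ_apply, ← algebraMap_eq,
    Derivation.map_algebraMap, Function.iterate_fixed (map_zero _)]

def rotate (a b : ℝ) : Pol →ₐ[ℝ] Pol := aeval ![linForm a b, linForm b (-a)]

@[simp] theorem rotate_X_zero : rotate a b (X 0) = linForm a b := by simp [rotate]

@[simp] theorem rotate_X_one : rotate a b (X 1) = linForm b (-a) := by simp [rotate]

theorem C_inv_mul_sq_add_sq (h : a ^ 2 + b ^ 2 ≠ 0) :
    C (a ^ 2 + b ^ 2)⁻¹ * (C a ^ 2 + C b ^ 2) = (1 : Pol) := by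
  rw [← C_pow, ← C_pow, ← C_add, ← C_mul, inv_mul_cancel₀ h, C_1]

/-- Inverse of `rotate a b`: the matrix `!![a, b; b, -a]` squares to `(a² + b²) • 1`. -/
def rotateEquiv (h : a ^ 2 + b ^ 2 ≠ 0) : Pol ≃ₐ[ℝ] Pol :=
  AlgEquiv.ofAlgHom (rotate a b)
    (aeval ![C (a ^ 2 + b ^ 2)⁻¹ * linForm a b, C (a ^ 2 + b ^ 2)⁻¹ * linForm b (-a)])
    (by
      ext i : 1
      fin_cases i <;> simp [linForm] <;>
        [linear_combination X 0 * C_inv_mul_sq_add_sq h;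
          linear_combination X 1 * C_inv_mul_sq_add_sq h])
    (by
      ext i : 1
      fin_cases i <;> simp [linForm] <;>
        [linear_combination X 0 * C_inv_mul_sq_add_sq h;
          linear_combination X 1 * C_inv_mul_sq_add_sq h])

theorem rotateEquiv_apply (h : a ^ 2 + b ^ 2 ≠ 0) (p : Pol) : rotateEquiv h p = rotate a b p :=
  rfl

theorem prime_linForm (h : (a, b) ≠ (0, 0)) : Prime (linForm a b) := by
  rw [← rotate_X_zero, ← rotateEquiv_apply (sq_add_sq_ne_zero_of_ne h)]
  exact (MulEquiv.prime_iff (rotateEquiv (sq_add_sq_ne_zero_of_ne h)).toMulEquiv).mpr X_prime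

theorem prime_linForm_perp (h : (a, b) ≠ (0, 0)) : Prime (linForm b (-a)) :=
  prime_linForm (by simpa [and_comm] using h)

theorem dirDeriv_rotate (p : Pol) :
    dirDeriv a b (rotate a b p) = (a ^ 2 + b ^ 2) • rotate a b (pderiv 0 p) := by
  induction p using MvPolynomial.induction_on with
  | C c => simp [← algebraMap_eq]
  | add p q hp hq => simp only [map_add, hp, hq, smul_add]
  | mul_X p i hp =>
    fin_cases i <;>
    simp [Derivation.leibniz, hp, dirDeriv_linForm, pderiv_X, smul_eq_C_mul] <;> ring

theorem dirDeriv_iterate_rotate (k : ℕ) (p : Pol) :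
    (dirDeriv a b)^[k] (rotate a b p) = (a ^ 2 + b ^ 2) ^ k • rotate a b ((pderiv 0)^[k] p) := by
  induction k with
  | zero => simp
  | succ k ih =>
    rw [Function.iterate_succ_apply', ih, Derivation.map_smul, dirDeriv_rotate, smul_smul,
      ← pow_succ, ← Function.iterate_succ_apply' (pderiv 0)]

theorem apply_zero_add_apply_one_of_mem_support {p : Pol} {d : ℕ} (hp : p.IsHomogeneous d)
    {m : Fin 2 →₀ ℕ} (hm : m ∈ p.support) : m 0 + m 1 = d := by
  rw [← hp (mem_support_iff.mp hm)]
  simp [Finsupp.weight_apply, Finsupp.sum_fintype]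

theorem perp_pow_dvd_of_dirDeriv_iterate_eq_zero (h : (a, b) ≠ (0, 0)) {F : Pol} {d k : ℕ}
    (hF : F.IsHomogeneous d) (hk : (dirDeriv a b)^[k] F = 0) :
    linForm b (-a) ^ (d + 1 - k) ∣ F := by
  set e := rotateEquiv (sq_add_sq_ne_zero_of_ne h)
  set G := e.symm F
  have hFG : F = rotate a b G := (e.apply_symm_apply F).symm
  have hG : G.IsHomogeneous d := by
    have := hF.aeval (n := 1)
      ![C (a ^ 2 + b ^ 2)⁻¹ * linForm a b, C (a ^ 2 + b ^ 2)⁻¹ * linForm b (-a)] <|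
      Fin.forall_fin_two.mpr ⟨(isHomogeneous_C _ _).mul (isHomogeneous_linForm _ _),
        (isHomogeneous_C _ _).mul (isHomogeneous_linForm _ _)⟩
    rwa [one_mul] at this
  have hker : (pderiv 0)^[k] G = 0 := by
    rw [hFG, dirDeriv_iterate_rotate, smul_eq_zero] at hk
    exact (map_eq_zero_iff _ e.injective).mp
      (hk.resolve_left (pow_ne_zero _ (sq_add_sq_ne_zero_of_ne h)))
  have hdvd : X 1 ^ (d + 1 - k) ∣ G := X_pow_dvd_of_forall_mem_support fun m hm => by
    have := lt_of_mem_support_of_pderiv_iterate_eq_zero hker hm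
    have := apply_zero_add_apply_one_of_mem_support hG hm
    omega
  rw [hFG, ← rotate_X_one, ← map_pow]
  exact map_dvd _ hdvd

theorem eq_smul_of_linForm_dvd (h : linForm a' b' ∣ linForm a b) :
    ∃ c : ℝ, linForm a b = c • linForm a' b' := by
  obtain ⟨u, hu⟩ := h
  by_cases h0 : linForm a b = 0
  · exact ⟨0, by rw [h0, zero_smul]⟩
  have hdeg := totalDegree_mul_of_isDomain (left_ne_zero_of_mul (hu ▸ h0))
    (right_ne_zero_of_mul (hu ▸ h0))
  rw [← hu, (isHomogeneous_linForm a b).totalDegree h0,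
    (isHomogeneous_linForm a' b').totalDegree (left_ne_zero_of_mul (hu ▸ h0))] at hdeg
  obtain ⟨c, rfl⟩ : ∃ c, u = C c := ⟨_, totalDegree_eq_zero_iff_eq_C.mp (by omega)⟩
  exact ⟨c, by rw [hu, smul_eq_C_mul, mul_comm]⟩

theorem isRelPrime_perp (h : (a, b) ≠ (0, 0))
    (hprop : ∀ c : ℝ, linForm a' b' ≠ c • linForm a b) :
    IsRelPrime (linForm b (-a)) (linForm b' (-a')) := by
  refine (prime_linForm_perp h).irreducible.isRelPrime_iff_not_dvd.mpr fun hdvd => ?_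
  obtain ⟨c, hc⟩ := eq_smul_of_linForm_dvd hdvd
  rw [linForm_eq_smul_iff] at hc
  exact hprop c (linForm_eq_smul_iff.mpr ⟨by linarith, hc.1⟩)

def apolarWeight (m : Fin 2 →₀ ℕ) : ℝ := (m 0).factorial * (m 1).factorial

theorem apolarWeight_pos (m : Fin 2 →₀ ℕ) : 0 < apolarWeight m := by
  unfold apolarWeight; positivity

theorem apolarWeight_add_single (m : Fin 2 →₀ ℕ) (i : Fin 2) :
    apolarWeight (m + Finsupp.single i 1) = (m i + 1) * apolarWeight m := by
  fin_cases i <;> simp [apolarWeight, Nat.factorial_succ] <;> ring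

/-- The apolarity pairing `⟨p, q⟩ = ∑ₘ pₘ qₘ m₀! m₁!`. -/
def apolar : LinearMap.BilinForm ℝ Pol :=
  (basisMonomials (Fin 2) ℝ).constr ℝ fun m => apolarWeight m • lcoeff ℝ m

theorem apolar_monomial (m : Fin 2 →₀ ℕ) (c : ℝ) (q : Pol) :
    apolar (monomial m c) q = c * apolarWeight m * coeff m q := by
  rw [show monomial m c = c • basisMonomials (Fin 2) ℝ m by
      rw [coe_basisMonomials, smul_monomial, smul_eq_mul, mul_one],
    map_smul, apolar, Module.Basis.constr_basis]
  simp [mul_assoc]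

theorem apolar_apply (p q : Pol) :
    apolar p q = ∑ m ∈ p.support, coeff m p * apolarWeight m * coeff m q := by
  conv_lhs => rw [p.as_sum, map_sum, LinearMap.sum_apply]
  simp only [apolar_monomial]

theorem eq_zero_of_apolar_self {p : Pol} (h : apolar p p = 0) : p = 0 := by
  rw [apolar_apply, Finset.sum_eq_zero_iff_of_nonneg fun m _ => by
    rw [mul_right_comm]; exact mul_nonneg (mul_self_nonneg _) (apolarWeight_pos m).le] at h
  by_contra hp
  obtain ⟨m, hm⟩ := ne_zero_iff.mp hp
  have := h m (mem_support_iff.mpr hm)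
  simp [hm, (apolarWeight_pos m).ne'] at this

theorem apolar_X_mul (i : Fin 2) (p q : Pol) : apolar (X i * p) q = apolar p (pderiv i q) := by
  induction p using MvPolynomial.induction_on' with
  | monomial s c =>
    rw [X, monomial_mul, one_mul, add_comm, apolar_monomial, apolar_monomial, coeff_pderiv,
      apolarWeight_add_single]
    ring
  | add p₁ p₂ h₁ h₂ =>
    rw [mul_add, map_add, map_add, LinearMap.add_apply, LinearMap.add_apply, h₁, h₂]

theorem apolar_linForm_mul (p q : Pol) :
    apolar (linForm a b * p) q = apolar p (dirDeriv a b q) := by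
  rw [linForm, add_mul, mul_assoc, mul_assoc, ← smul_eq_C_mul, ← smul_eq_C_mul]
  simp [apolar_X_mul, dirDeriv]

theorem apolar_linForm_pow_mul (k : ℕ) (p q : Pol) :
    apolar (linForm a b ^ k * p) q = apolar p ((dirDeriv a b)^[k] q) := by
  induction k generalizing p with
  | zero => simp
  | succ k ih => rw [pow_succ, mul_assoc, ih, apolar_linForm_mul, Function.iterate_succ_apply']

theorem apolar_eq_zero_of_mem_span {ι : Type*} {a b : ι → ℝ} {s : ℕ} {F p : Pol}
    (hF : ∀ i, (dirDeriv (a i) (b i))^[s] F = 0)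
    (hp : p ∈ Ideal.span (Set.range fun i => linForm (a i) (b i) ^ s)) : apolar p F = 0 := by
  suffices ∀ c, apolar (c * p) F = 0 by simpa using this 1
  induction hp using Submodule.span_induction with
  | mem x hx =>
    obtain ⟨i, rfl⟩ := hx
    intro c
    rw [mul_comm, apolar_linForm_pow_mul, hF, map_zero]
  | zero => simp
  | add x y _ _ hx hy => intro c; rw [mul_add, map_add, LinearMap.add_apply, hx, hy, add_zero]
  | smul d x _ hx => intro c; rw [smul_eq_mul, ← mul_assoc, hx]

theorem homogeneousSubmodule_le_of_apolar (W : Submodule ℝ Pol) (d : ℕ)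
    (h : ∀ F : Pol, F.IsHomogeneous d →
      (∀ p ∈ W, p.IsHomogeneous d → apolar p F = 0) → F = 0) :
    homogeneousSubmodule (Fin 2) ℝ d ≤ W := by
  set V := homogeneousSubmodule (Fin 2) ℝ d
  have : FiniteDimensional ℝ V :=
    Module.Finite.iff_fg.mpr (homogeneousSubmodule_fg (Fin 2) ℝ d)
  set B := apolar.restrict V
  set W' := W.comap V.subtype
  have hB : B.Nondegenerate :=
    ⟨fun F hF => Subtype.ext (eq_zero_of_apolar_self (hF F)),
      fun F hF => Subtype.ext (eq_zero_of_apolar_self (hF F))⟩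
  have hW' : B.orthogonal W' = ⊥ := by
    refine (Submodule.eq_bot_iff _).mpr fun F hF => Subtype.ext ?_
    exact h F F.2 fun p hpW hpd => hF ⟨p, hpd⟩ hpW
  have : W' = ⊤ := by
    apply Submodule.eq_top_of_finrank_eq
    have := LinearMap.BilinForm.finrank_orthogonal hB W'
    rw [hW', finrank_bot] at this
    exact le_antisymm (Submodule.finrank_le W') (Nat.sub_eq_zero_iff_le.mp this.symm)
  exact fun p hp => (Submodule.mem_comap.mp (this ▸ Submodule.mem_top : (⟨p, hp⟩ : V) ∈ W'))

theorem homogeneousSubmodule_le_span_linForm_pow {ι : Type*} [Fintype ι] {a b : ι → ℝ}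
    (hab : ∀ i, (a i, b i) ≠ (0, 0))
    (hprop : Pairwise fun i j => ∀ c : ℝ, linForm (a i) (b i) ≠ c • linForm (a j) (b j))
    {r d : ℕ} (hd : d < Fintype.card ι * (d - r)) :
    homogeneousSubmodule (Fin 2) ℝ d ≤
      (Ideal.span (Set.range fun i => linForm (a i) (b i) ^ (r + 1))).restrictScalars ℝ := by
  have hrd : r + 1 ≤ d := by
    by_contra! h
    rw [Nat.sub_eq_zero_of_le (by omega), mul_zero] at hd
    omega
  refine homogeneousSubmodule_le_of_apolar _ d fun F hF horth => ?_
  have hker : ∀ i, (dirDeriv (a i) (b i))^[r + 1] F = 0 := fun i => by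
    refine eq_zero_of_apolar_self ?_
    rw [← apolar_linForm_pow_mul]
    refine horth _ (Ideal.mul_mem_right _ _ (Ideal.subset_span ⟨i, rfl⟩)) ?_
    convert ((isHomogeneous_linForm _ _).pow (r + 1)).mul
      (isHomogeneous_dirDeriv_iterate hF (r + 1)) using 1
    omega
  have hdvd : ∏ i, linForm (b i) (-a i) ^ (d - r) ∣ F :=
    Finset.prod_dvd_of_isRelPrime
      (fun i _ j _ hij => (isRelPrime_perp (hab i) (hprop hij.symm)).pow)
      fun i _ => by simpa using perp_pow_dvd_of_dirDeriv_iterate_eq_zero (hab i) hF (hker i)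
  refine (IsHomogeneous.prod _ _ (fun _ => 1 * (d - r))
    fun i _ => (isHomogeneous_linForm _ _).pow _).eq_zero_of_dvd ?_ hF hdvd (by simpa using hd)
  exact Finset.prod_ne_zero_iff.mpr fun i _ => pow_ne_zero _ (prime_linForm_perp (hab i)).ne_zero

theorem X_pow_mul_X_pow_eq_monomial (m : Fin 2 →₀ ℕ) :
    (X 0 ^ m 0 * X 1 ^ m 1 : Pol) = monomial m 1 := by
  rw [monomial_eq, C_1, one_mul, Finsupp.prod_fintype _ _ fun _ => pow_zero _, Fin.prod_univ_two]

theorem exists_X_pow_mul_X_pow_notMem_span {ι : Type*} [Fintype ι] {a b : ι → ℝ}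
    (hab : ∀ i, (a i, b i) ≠ (0, 0)) {r q : ℕ} (hq : Fintype.card ι * q ≤ r + q) :
    ∃ i j : ℕ, i + j = r + q ∧
      X 0 ^ i * X 1 ^ j ∉ Ideal.span (Set.range fun k => linForm (a k) (b k) ^ (r + 1)) := by
  classical
  set perp : ι → Pol := fun k => linForm (b k) (-a k)
  set c := r + q - Fintype.card ι * q
  have hhom (s : Finset ι) :
      ((∏ k ∈ s, perp k ^ q) * X 0 ^ c).IsHomogeneous (s.card * q + c) := by
      convert (IsHomogeneous.prod s (fun k => perp k ^ q) (fun _ => 1 * q) fun k _ =>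
        (isHomogeneous_linForm _ _).pow q).mul (isHomogeneous_X_pow 0 c) using 2
      simp
  set F := (∏ k, perp k ^ q) * X 0 ^ c
  have hF : F.IsHomogeneous (r + q) := by
    convert hhom Finset.univ using 1
    rw [Finset.card_univ]
    omega
  have hker : ∀ k, (dirDeriv (a k) (b k))^[r + 1] F = 0 := fun k => by
    have hsplit : F = perp k ^ q * ((∏ j ∈ Finset.univ.erase k, perp j ^ q) * X 0 ^ c) := by
      rw [← mul_assoc, Finset.mul_prod_erase _ (fun j => perp j ^ q) (Finset.mem_univ k)]
    have hrest := hhom (Finset.univ.erase k)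
    rw [Finset.card_erase_of_mem (Finset.mem_univ k), Finset.card_univ] at hrest
    rw [hsplit, dirDeriv_iterate_perp_pow_mul, dirDeriv_iterate_eq_zero_of_lt hrest, mul_zero]
    have : 0 < Fintype.card ι := Fintype.card_pos_iff.mpr ⟨k⟩
    have : (Fintype.card ι - 1) * q + q = Fintype.card ι * q := by
      rw [← Nat.succ_mul, Nat.sub_one, Nat.succ_pred_eq_of_pos this]
    omega
  have hF0 : F ≠ 0 := mul_ne_zero
    (Finset.prod_ne_zero_iff.mpr fun k _ => pow_ne_zero _ (prime_linForm_perp (hab k)).ne_zero)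
    (pow_ne_zero _ (X_ne_zero 0))
  obtain ⟨m, hm⟩ := ne_zero_iff.mp hF0
  refine ⟨m 0, m 1, apply_zero_add_apply_one_of_mem_support hF (mem_support_iff.mpr hm),
    fun hmem => ?_⟩
  have := apolar_eq_zero_of_mem_span hker hmem
  rw [X_pow_mul_X_pow_eq_monomial, apolar_monomial, one_mul] at this
  exact mul_ne_zero (apolarWeight_pos m).ne' hm this

theorem X_pow_mul_X_pow_mem_of_le {I : Ideal Pol} {d : ℕ}
    (hI : homogeneousSubmodule (Fin 2) ℝ d ≤ I.restrictScalars ℝ) {i j : ℕ}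
    (hij : d ≤ i + j) : X 0 ^ i * X 1 ^ j ∈ I := by
  have hmem : X 0 ^ min i d * X 1 ^ (d - min i d) ∈ I := hI <| by
    simpa [show min i d + (d - min i d) = d by omega] using
      (isHomogeneous_X_pow (R := ℝ) 0 (min i d)).mul (isHomogeneous_X_pow 1 (d - min i d))
  exact I.mem_of_dvd
    (mul_dvd_mul (pow_dvd_pow _ (min_le_left i d)) (pow_dvd_pow _ (by omega))) hmem

end Pol

theorem Int.ceil_natCast_add_one_div_natCast {K : Type*} [Field K] [LinearOrder K]
    [IsStrictOrderedRing K] [FloorRing K] (r u : ℕ) (hu : 0 < u) :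
    ⌈((r : K) + 1) / u⌉ = ((r / u + 1 : ℕ) : ℤ) := by
  have hu' : (0 : K) < u := by exact_mod_cast hu
  rw [Int.ceil_eq_iff, lt_div_iff₀ hu', div_le_iff₀ hu']
  push_cast
  constructor
  · rw [add_sub_cancel_right]
    exact_mod_cast Nat.lt_succ_of_le (Nat.div_mul_le_self r u)
  · exact_mod_cast (mul_comm u _ ▸ Nat.lt_mul_div_succ r hu :)

theorem Nat.add_div_add_one_lt_succ_mul (r u : ℕ) (hu : 0 < u) :
    r + r / u + 1 < (u + 1) * (r / u + 1) := by
  have := Nat.lt_mul_div_succ r hu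
  rw [add_mul, one_mul]
  omega

theorem Nat.mul_div_le_add_div_of_min_eq {r n u : ℕ} (h : min (r + 2) n = u + 1) :
    n * (r / u) ≤ r + r / u := by
  rcases le_or_gt n (r + 2) with hn | hn
  · rw [min_eq_right hn] at h
    subst h
    have := Nat.mul_div_le r u
    rw [add_mul, one_mul]
    omega
  · rw [min_eq_left hn.le] at h
    rw [Nat.div_eq_of_lt (show r < u by omega), mul_zero]
    exact Nat.zero_le _

open Pol in
/-- Let `ℓ₁, …, ℓₙ` (`n ≥ 2`) be pairwise non-proportional
homogeneous linear forms in `ℝ[x,y]`, `I = ⟨ℓ₁^{r+1}, …, ℓₙ^{r+1}⟩`,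
`t = min (r+2) n` and `Ω = r + ⌈(r+1)/(t−1)⌉`. Then `Ω` is the minimal `d` such
that `xⁱ yʲ ∈ I` whenever `i + j ≥ d`. -/
theorem stmt4 (r n : ℕ) (hn : 2 ≤ n) (ℓ : Fin n → Pol)
    (hlin : ∀ i, ∃ a b : ℝ, (a, b) ≠ (0, 0) ∧ ℓ i = C a * X 0 + C b * X 1)
    (hprop : ∀ i j, i ≠ j → ∀ c : ℝ, ℓ i ≠ c • ℓ j)
    (I : Ideal Pol) (hI : I = Ideal.span (Set.range fun i => ℓ i ^ (r + 1)))
    (t : ℕ) (ht : t = min (r + 2) n)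
    (Ω : ℤ) (hΩ : Ω = r + ⌈((r : ℚ) + 1) / ((t : ℚ) - 1)⌉) :
    (∀ i j : ℕ, Ω ≤ (i : ℤ) + (j : ℤ) → (X 0 : Pol) ^ i * X 1 ^ j ∈ I) ∧
    (∃ i j : ℕ, (i : ℤ) + (j : ℤ) = Ω - 1 ∧ (X 0 : Pol) ^ i * X 1 ^ j ∉ I) := by
  choose a b hab hℓ using hlin
  obtain rfl : ℓ = fun i => linForm (a i) (b i) := funext hℓ
  subst hI
  obtain ⟨u, rfl⟩ : ∃ u, t = u + 1 := ⟨t - 1, by omega⟩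
  have hu : 0 < u := by omega
  have htn : u + 1 ≤ n := ht ▸ min_le_right _ _
  rw [show ((u + 1 : ℕ) : ℚ) - 1 = u by push_cast; ring,
    Int.ceil_natCast_add_one_div_natCast r u hu] at hΩ
  refine ⟨fun i j hij => ?_, ?_⟩
  · have hsub := homogeneousSubmodule_le_span_linForm_pow (ι := Fin (u + 1))
      (a := a ∘ Fin.castLE htn) (b := b ∘ Fin.castLE htn) (fun _ => hab _)
      (fun i j hij => hprop _ _ ((Fin.castLE_injective htn).ne hij)) (r := r)
      (d := r + r / u + 1) (by simpa [add_assoc] using Nat.add_div_add_one_lt_succ_mul r u hu)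
    refine Ideal.span_mono ?_ (X_pow_mul_X_pow_mem_of_le hsub (by omega))
    exact Set.range_subset_iff.mpr fun i => ⟨Fin.castLE htn i, rfl⟩
  · obtain ⟨i, j, hij, hnot⟩ := exists_X_pow_mul_X_pow_notMem_span hab
      (by simpa using Nat.mul_div_le_add_div_of_min_eq ht.symm)
    exact ⟨i, j, by omega, hnot⟩

end
end

section
/- Let s ≥ 0 and n ≥ 1 be integers and let ℓ_1, …, ℓ_n ∈ ℝ[x,y] be homogeneous linear forms that are pairwise non-proportional. Then the dimension of the ℝ-linear span of {ℓ_1^s, ℓ_2^s, …, ℓ_n^s} equals min(s+1, n). -/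
/-!
The `s`-th powers of linear forms lie in the span of the `s + 1` monomials `xᵏ yˢ⁻ᵏ`, so it
suffices that any `m ≤ s + 1` pairwise non-proportional forms have linearly independent `s`-th
powers. This goes by induction on `m`: the derivation `b ∂ₓ - a ∂_y` kills `ℓ = a x + b y` and
sends `ℓ'ˢ` to `s · det(ℓ', ℓ) · ℓ'ˢ⁻¹`, with `det(ℓ', ℓ) ≠ 0` for `ℓ'` not proportional to `ℓ`;
applied to a vanishing combination of `m` powers it gives one of `m - 1` powers of exponent `s - 1`.
-/

open MvPolynomial

noncomputable section

open Submodule Set Module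

theorem finrank_span_range_eq_min {K V : Type*} [DivisionRing K] [AddCommGroup V] [Module K V]
    {m n : ℕ} (v : Fin n → V) (w : Fin m → V) (hvw : ∀ i, v i ∈ span K (range w))
    (hind : LinearIndependent K (v ∘ Fin.castLE (min_le_right m n))) :
    finrank K (span K (range v)) = min m n := by
  have := FiniteDimensional.span_of_finite K (finite_range v)
  have := FiniteDimensional.span_of_finite K (finite_range w)
  refine le_antisymm (le_min ?_ ((finrank_range_le_card v).trans_eq (Fintype.card_fin n))) ?_
  · calc finrank K (span K (range v)) ≤ finrank K (span K (range w)) :=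
          Submodule.finrank_mono (span_le.2 (range_subset_iff.2 hvw))
      _ ≤ m := (finrank_range_le_card w).trans_eq (Fintype.card_fin m)
  · calc min m n = finrank K (span K (range (v ∘ Fin.castLE (min_le_right m n)))) := by
          rw [finrank_span_eq_card hind, Fintype.card_fin]
      _ ≤ finrank K (span K (range v)) :=
          Submodule.finrank_mono (span_mono (range_comp_subset_range _ _))

def linearForm (a b : ℝ) : Pol := C a * X 0 + C b * X 1

lemma pderiv_zero_linearForm (a b : ℝ) : pderiv 0 (linearForm a b) = C a := by
  simp [linearForm, pderiv_X]

lemma pderiv_one_linearForm (a b : ℝ) : pderiv 1 (linearForm a b) = C b := by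
  simp [linearForm, pderiv_X]

lemma linearForm_ne_zero {a b : ℝ} (h : (a, b) ≠ (0, 0)) : linearForm a b ≠ 0 := by
  intro h0
  have ha := pderiv_zero_linearForm a b
  have hb := pderiv_one_linearForm a b
  simp only [h0, map_zero, eq_comm (a := (0 : Pol)), C_eq_zero] at ha hb
  exact h (by rw [ha, hb])

lemma exists_linearForm_eq_smul {a b a' b' : ℝ} (h' : (a', b') ≠ (0, 0))
    (hcross : a * b' - a' * b = 0) : ∃ c : ℝ, linearForm a b = c • linearForm a' b' := by
  obtain ⟨c, hca, hcb⟩ : ∃ c : ℝ, a = c * a' ∧ b = c * b' := by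
    by_cases ha' : a' = 0
    · have hb' : b' ≠ 0 := fun hb' => h' (by rw [ha', hb'])
      exact ⟨b / b', by subst ha'; field_simp; linear_combination hcross, by field_simp⟩
    · exact ⟨a / a', by field_simp, by field_simp; linear_combination -hcross⟩
  refine ⟨c, ?_⟩
  simp only [linearForm, hca, hcb, smul_eq_C_mul, map_mul]
  ring

def annihilatingDerivation (a b : ℝ) : Derivation ℝ Pol Pol := b • pderiv 0 - a • pderiv 1

lemma annihilatingDerivation_linearForm_pow (a b a' b' : ℝ) (s : ℕ) :
    annihilatingDerivation a b (linearForm a' b' ^ s)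
      = (s * (a' * b - a * b')) • linearForm a' b' ^ (s - 1) := by
  rw [Derivation.leibniz_pow]
  simp only [annihilatingDerivation, Derivation.coe_sub, Derivation.coe_smul, Pi.sub_apply,
    Pi.smul_apply, pderiv_zero_linearForm, pderiv_one_linearForm, smul_eq_C_mul]
  simp only [map_mul, map_sub, nsmul_eq_mul, map_natCast]
  ring

theorem linearIndependent_linearForm_pow {n s : ℕ} (hns : n ≤ s + 1) (a b : Fin n → ℝ)
    (hne : ∀ i, (a i, b i) ≠ (0, 0)) (hcross : Pairwise fun i j => a i * b j - a j * b i ≠ 0) :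
    LinearIndependent ℝ fun i => linearForm (a i) (b i) ^ s := by
  induction n generalizing s with
  | zero => exact linearIndependent_empty_type
  | succ n ih =>
    rw [Fintype.linearIndependent_iff]
    intro c hc
    rw [Fin.sum_univ_castSucc] at hc
    have hlower := congrArg (annihilatingDerivation (a (Fin.last n)) (b (Fin.last n))) hc
    simp only [map_add, map_sum, Derivation.map_smul, annihilatingDerivation_linearForm_pow,
      map_zero, smul_smul, sub_self, mul_zero, zero_smul, smul_zero, add_zero] at hlower
    have hinit : ∀ i : Fin n, c i.castSucc = 0 := by
      intro i
      have hcoeff := Fintype.linearIndependent_iff.1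
        (ih (s := s - 1) (by omega) _ _ (fun i => hne _)
          (hcross.comp_of_injective (Fin.castSucc_injective n))) _ hlower i
      have hs : (s : ℝ) ≠ 0 := Nat.cast_ne_zero.2 (by have := i.2; omega)
      simpa [hs, hcross (Fin.castSucc_lt_last i).ne] using hcoeff
    simp only [hinit, zero_smul, Finset.sum_const_zero, zero_add, smul_eq_zero] at hc
    have hc_last := hc.resolve_right (pow_ne_zero _ (linearForm_ne_zero (hne _)))
    exact Fin.lastCases hc_last hinit

lemma linearForm_pow_mem_span_monomials (a b : ℝ) (s : ℕ) :
    linearForm a b ^ s ∈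
      span ℝ (range fun k : Fin (s + 1) => (X 0 : Pol) ^ (k : ℕ) * X 1 ^ (s - k)) := by
  rw [linearForm, add_pow]
  refine sum_mem fun k hk => ?_
  have hmonomial : (C a * X 0) ^ k * (C b * X 1) ^ (s - k) * (s.choose k : Pol)
      = (a ^ k * b ^ (s - k) * s.choose k) • ((X 0 : Pol) ^ k * X 1 ^ (s - k)) := by
    simp only [smul_eq_C_mul, map_mul, map_pow, map_natCast]
    ring
  rw [hmonomial]
  exact smul_mem _ _ (subset_span ⟨⟨k, Finset.mem_range.1 hk⟩, rfl⟩)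

theorem stmt5_general (s n : ℕ) (ℓ : Fin n → Pol)
    (hlin : ∀ i, ∃ a b : ℝ, (a, b) ≠ (0, 0) ∧ ℓ i = C a * X 0 + C b * X 1)
    (hprop : ∀ i j, i ≠ j → ∀ c : ℝ, ℓ i ≠ c • ℓ j) :
    Module.finrank ℝ ↥(Submodule.span ℝ (Set.range fun i => ℓ i ^ s)) =
      min (s + 1) n := by
  choose a b hab hℓ using hlin
  obtain rfl : ℓ = fun i => linearForm (a i) (b i) := funext hℓ
  have hcross : Pairwise fun i j => a i * b j - a j * b i ≠ 0 := fun i j hij h =>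
    let ⟨c, hc⟩ := exists_linearForm_eq_smul (hab j) h
    hprop i j hij c hc
  refine finrank_span_range_eq_min _ _ (fun i => linearForm_pow_mem_span_monomials _ _ s) ?_
  exact linearIndependent_linearForm_pow (min_le_left _ _) _ _ (fun i => hab _)
    (hcross.comp_of_injective (Fin.castLE_injective _))

/-- Let `ℓ₁, …, ℓₙ` (`n ≥ 1`) be pairwise non-proportional
homogeneous linear forms in `ℝ[x,y]` and `s ≥ 0`. Then the dimension of the
span of `{ℓ₁ˢ, …, ℓₙˢ}` equals `min (s+1) n`. -/
theorem stmt5 (s n : ℕ) (hn : 1 ≤ n) (ℓ : Fin n → Pol)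
    (hlin : ∀ i, ∃ a b : ℝ, (a, b) ≠ (0, 0) ∧ ℓ i = C a * X 0 + C b * X 1)
    (hprop : ∀ i j, i ≠ j → ∀ c : ℝ, ℓ i ≠ c • ℓ j) :
    Module.finrank ℝ ↥(Submodule.span ℝ (Set.range fun i => ℓ i ^ s)) =
      min (s + 1) n :=
  stmt5_general s n ℓ hlin hprop

end
end

section
/- Let r ≥ 0 and m ≥ 3r + 1 be integers and set z = x + y + 1 ∈ ℝ[x,y]. Then every polynomial f ∈ ℝ[x,y] of total degree at most m can be written f = a·x^{r+1} + b·y^{r+1} + c·z^{r+1} with a, b, c ∈ ℝ[x,y] of total degree at most m − r − 1; that is, P_m = x^{r+1}·P_{m−r−1} + y^{r+1}·P_{m−r−1} + z^{r+1}·P_{m−r−1}. -/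
/-!
Since `1 = z - x - y`, a product `x^i y^j z^k` can be rewritten as
`x^i y^j z^(k+1) - x^(i+1) y^j z^k - x^i y^(j+1) z^k`, which raises the exponent sum by one
without raising the degree. Starting from the monomials `x^i y^j` of `P_m` and repeating this
until the exponent sum reaches `3r + 1 ≤ m`, every monomial becomes a combination of products
`x^i y^j z^k` with `i + j + k ≤ m` and, by pigeonhole, one exponent at least `r + 1`.
-/

open MvPolynomial

noncomputable section

namespace MvPolynomial

variable {R σ : Type*} [CommRing R]

def degLEMul (n : ℕ) (u : MvPolynomial σ R) : Submodule R (MvPolynomial σ R) :=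
  (restrictTotalDegree σ R n).map (LinearMap.mulRight R u)

theorem mem_degLEMul {n : ℕ} {u g : MvPolynomial σ R} :
    g ∈ degLEMul n u ↔ ∃ a : MvPolynomial σ R, a.totalDegree ≤ n ∧ a * u = g := by
  simp only [degLEMul, Submodule.mem_map, mem_restrictTotalDegree, LinearMap.mulRight_apply]

/-- The degree-truncated ideal `u^e · P_n + v^e · P_n + w^e · P_n`. -/
def truncPowIdeal (u v w : MvPolynomial σ R) (e n : ℕ) : Submodule R (MvPolynomial σ R) :=
  degLEMul n (u ^ e) ⊔ degLEMul n (v ^ e) ⊔ degLEMul n (w ^ e)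

theorem mem_truncPowIdeal {u v w g : MvPolynomial σ R} {e n : ℕ} :
    g ∈ truncPowIdeal u v w e n ↔ ∃ a b c : MvPolynomial σ R,
      a.totalDegree ≤ n ∧ b.totalDegree ≤ n ∧ c.totalDegree ≤ n ∧
      g = a * u ^ e + b * v ^ e + c * w ^ e := by
  simp only [truncPowIdeal, Submodule.mem_sup, mem_degLEMul]
  constructor
  · rintro ⟨_, ⟨_, ⟨a, ha, rfl⟩, _, ⟨b, hb, rfl⟩, rfl⟩, _, ⟨c, hc, rfl⟩, rfl⟩
    exact ⟨a, b, c, ha, hb, hc, rfl⟩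
  · rintro ⟨a, b, c, ha, hb, hc, rfl⟩
    exact ⟨_, ⟨_, ⟨a, ha, rfl⟩, _, ⟨b, hb, rfl⟩, rfl⟩, _, ⟨c, hc, rfl⟩, rfl⟩

theorem totalDegree_pow_le_of_totalDegree_le_one {u : MvPolynomial σ R}
    (hu : u.totalDegree ≤ 1) (i : ℕ) : (u ^ i).totalDegree ≤ i :=
  (totalDegree_pow u i).trans (by simpa using Nat.mul_le_mul_left i hu)

theorem totalDegree_pow_mul_pow_mul_pow_le {u v w : MvPolynomial σ R}
    (hu : u.totalDegree ≤ 1) (hv : v.totalDegree ≤ 1) (hw : w.totalDegree ≤ 1) (i j k : ℕ) :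
    (u ^ i * v ^ j * w ^ k).totalDegree ≤ i + j + k :=
  (totalDegree_mul _ _).trans <| add_le_add ((totalDegree_mul _ _).trans <|
    add_le_add (totalDegree_pow_le_of_totalDegree_le_one hu i)
      (totalDegree_pow_le_of_totalDegree_le_one hv j))
    (totalDegree_pow_le_of_totalDegree_le_one hw k)

/-- By pigeonhole, one of the exponents is at least `r + 1`. -/
theorem pow_mul_pow_mul_pow_mem_truncPowIdeal {u v w : MvPolynomial σ R}
    (hu : u.totalDegree ≤ 1) (hv : v.totalDegree ≤ 1) (hw : w.totalDegree ≤ 1) {r n i j k : ℕ}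
    (hlo : 3 * r + 1 ≤ i + j + k) (hhi : i + j + k ≤ n + (r + 1)) :
    u ^ i * v ^ j * w ^ k ∈ truncPowIdeal u v w (r + 1) n := by
  have hdeg (i' j' k' : ℕ) (h : i' + j' + k' ≤ n) :
      (u ^ i' * v ^ j' * w ^ k').totalDegree ≤ n :=
    (totalDegree_pow_mul_pow_mul_pow_le hu hv hw i' j' k').trans h
  rw [mem_truncPowIdeal]
  rcases (by omega : r + 1 ≤ i ∨ r + 1 ≤ j ∨ r + 1 ≤ k) with hi | hj | hk
  · refine ⟨u ^ (i - (r + 1)) * v ^ j * w ^ k, 0, 0, hdeg _ _ _ (by omega), by simp, by simp, ?_⟩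
    rw [← pow_mul_pow_sub u hi]; ring
  · refine ⟨0, u ^ i * v ^ (j - (r + 1)) * w ^ k, 0, by simp, hdeg _ _ _ (by omega), by simp, ?_⟩
    rw [← pow_mul_pow_sub v hj]; ring
  · refine ⟨0, 0, u ^ i * v ^ j * w ^ (k - (r + 1)), by simp, by simp, hdeg _ _ _ (by omega), ?_⟩
    rw [← pow_mul_pow_sub w hk]; ring

theorem totalDegree_add_add_one_le {u v : MvPolynomial σ R} (hu : u.totalDegree ≤ 1)
    (hv : v.totalDegree ≤ 1) : (u + v + 1).totalDegree ≤ 1 :=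
  (totalDegree_add _ _).trans <| max_le ((totalDegree_add _ _).trans (max_le hu hv))
    (by simp)

theorem pow_mul_pow_mul_add_add_one_pow_mem_truncPowIdeal {u v : MvPolynomial σ R}
    (hu : u.totalDegree ≤ 1) (hv : v.totalDegree ≤ 1) {r n : ℕ} (hrn : 3 * r + 1 ≤ n + (r + 1))
    {i j k : ℕ} (hijk : i + j + k ≤ n + (r + 1)) :
    u ^ i * v ^ j * (u + v + 1) ^ k ∈ truncPowIdeal u v (u + v + 1) (r + 1) n := by
  have hw := totalDegree_add_add_one_le hu hv
  obtain ⟨d, hd⟩ : ∃ d, 3 * r + 1 ≤ i + j + k + d := ⟨3 * r + 1, by omega⟩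
  induction d generalizing i j k with
  | zero => exact pow_mul_pow_mul_pow_mem_truncPowIdeal hu hv hw hd hijk
  | succ d ih =>
    by_cases hlo : 3 * r + 1 ≤ i + j + k
    · exact pow_mul_pow_mul_pow_mem_truncPowIdeal hu hv hw hlo hijk
    -- multiplying by `1 = (u + v + 1) - u - v` raises the exponent sum by one
    have hsplit : u ^ i * v ^ j * (u + v + 1) ^ k =
        u ^ i * v ^ j * (u + v + 1) ^ (k + 1) - u ^ (i + 1) * v ^ j * (u + v + 1) ^ k
          - u ^ i * v ^ (j + 1) * (u + v + 1) ^ k := by ring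
    rw [hsplit]
    refine Submodule.sub_mem _ (Submodule.sub_mem _ ?_ ?_) ?_ <;> exact ih (by omega) (by omega)

theorem restrictTotalDegree_le_truncPowIdeal [Nontrivial R] {r n : ℕ}
    (hrn : 3 * r + 1 ≤ n + (r + 1)) :
    restrictTotalDegree (Fin 2) R (n + (r + 1)) ≤
      truncPowIdeal (X 0) (X 1) (X 0 + X 1 + 1) (r + 1) n := by
  intro f hf
  rw [mem_restrictTotalDegree] at hf
  rw [as_sum f]
  refine Submodule.sum_mem _ fun d hd => ?_
  have hdeg : d 0 + d 1 + 0 ≤ n + (r + 1) := by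
    have := (le_totalDegree hd).trans hf
    rwa [Finsupp.sum_fintype _ _ fun _ => rfl, Fin.sum_univ_two] at this
  rw [monomial_fin_two, mul_assoc, ← smul_eq_C_mul, ← mul_one (_ * _),
    ← pow_zero (X 0 + X 1 + 1 : MvPolynomial (Fin 2) R)]
  exact Submodule.smul_mem _ _ <| pow_mul_pow_mul_add_add_one_pow_mem_truncPowIdeal
    (totalDegree_X (R := R) 0).le (totalDegree_X (R := R) 1).le hrn hdeg

end MvPolynomial

/-- For `m ≥ 3r + 1` and `z = x + y + 1`, every polynomial of
total degree at most `m` can be written `a·x^{r+1} + b·y^{r+1} + c·z^{r+1}`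
with `a, b, c` of total degree at most `m − r − 1`. -/
theorem stmt8 (r m : ℕ) (hm : 3 * r + 1 ≤ m)
    (f : Pol) (hf : f.totalDegree ≤ m) :
    ∃ a b c : Pol,
      a.totalDegree ≤ m - (r + 1) ∧
      b.totalDegree ≤ m - (r + 1) ∧
      c.totalDegree ≤ m - (r + 1) ∧
      f = a * X 0 ^ (r + 1) + b * X 1 ^ (r + 1) + c * (X 0 + X 1 + 1) ^ (r + 1) := by
  obtain ⟨n, rfl⟩ : ∃ n, m = n + (r + 1) := ⟨m - (r + 1), by omega⟩
  rw [Nat.add_sub_cancel]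
  exact mem_truncPowIdeal.1 <|
    restrictTotalDegree_le_truncPowIdeal hm ((mem_restrictTotalDegree _ _ _).2 hf)

end
end
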